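/- For elements a, b in an inverse ∧-semigroup with zero, every ultrafilter containing a also contains b (i.e., V_a ⊆ V_b) if and only if a → b. -/

import Mathlib

/-- An inverse semigroup with zero whose natural partial order has binary meets
(an inverse ∧-semigroup with zero). The order `≤` is required to coincide with
the natural partial order: `a ≤ b ↔ a = b * (a⁻¹ * a)`. -/
class InverseMeetSemigroup (S : Type*) extends Semigroup S, Zero S, Inv S, SemilatticeInf S where
  mul_inv_mul : ∀ a : S, a * a⁻¹ * a = a
  inv_mul_inv : ∀ a : S, a⁻¹ * a * a⁻¹ = a⁻¹
  idem_comm : ∀ e f : S, e * e = e → f * f = f → e * f = f * e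
  zero_mul : ∀ a : S, (0 : S) * a = 0
  mul_zero : ∀ a : S, a * (0 : S) = 0
  le_iff : ∀ a b : S, a ≤ b ↔ a = b * (a⁻¹ * a)

variable {S : Type*} [InverseMeetSemigroup S]

/-- The Lenz arrow relation: `a → b` iff every nonzero `x ≤ a` satisfies `x ⊓ b ≠ 0`. -/
def LenzArrow (a b : S) : Prop := ∀ x : S, x ≠ 0 → x ≤ a → x ⊓ b ≠ 0

/-- A filter: a nonempty, downward directed, upward closed subset not containing `0`. -/
def IsFilt (F : Set S) : Prop :=
  F.Nonempty ∧ (0 : S) ∉ F ∧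
  (∀ x ∈ F, ∀ y : S, x ≤ y → y ∈ F) ∧
  (∀ x ∈ F, ∀ y ∈ F, ∃ z ∈ F, z ≤ x ∧ z ≤ y)

/-- An ultrafilter: a maximal filter. -/
def IsUltra (F : Set S) : Prop :=
  IsFilt F ∧ ∀ G : Set S, IsFilt G → F ⊆ G → G = F

/-! Only the meet-semilattice structure with least element `0` matters. If `a → b` and `F` is an
ultrafilter containing `a`, then `b` meets every element of `F` nontrivially, so the filter
generated by `F ∪ {b}` is proper and maximality puts `b` in `F`. Conversely, if a nonzero
`x ≤ a` had `x ⊓ b = 0`, an ultrafilter through `x` (Zorn) would contain `a`, hence `b`, hence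
`x ⊓ b = 0`. -/

namespace InverseMeetSemigroup

theorem zero_le (b : S) : (0 : S) ≤ b := by
  rw [le_iff, mul_zero, mul_zero]

theorem eq_zero_of_le_zero {x : S} (h : x ≤ 0) : x = 0 :=
  le_antisymm h (zero_le x)

end InverseMeetSemigroup

open InverseMeetSemigroup

namespace IsFilt

variable {F : Set S}

theorem ne_zero_of_mem (hF : IsFilt F) {x : S} (hx : x ∈ F) : x ≠ 0 :=
  fun h => hF.2.1 (h ▸ hx)

theorem mem_of_le (hF : IsFilt F) {x y : S} (hx : x ∈ F) (hxy : x ≤ y) : y ∈ F :=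
  hF.2.2.1 x hx y hxy

theorem inf_mem (hF : IsFilt F) {x y : S} (hx : x ∈ F) (hy : y ∈ F) : x ⊓ y ∈ F := by
  obtain ⟨z, hz, hzx, hzy⟩ := hF.2.2.2 x hx y hy
  exact hF.mem_of_le hz (le_inf hzx hzy)

theorem inf_ne_zero (hF : IsFilt F) {x y : S} (hx : x ∈ F) (hy : y ∈ F) : x ⊓ y ≠ 0 :=
  hF.ne_zero_of_mem (hF.inf_mem hx hy)

end IsFilt

theorem isFilt_Ici {x : S} (hx : x ≠ 0) : IsFilt (Set.Ici x) :=
  ⟨⟨x, le_rfl⟩, fun h => hx (eq_zero_of_le_zero h), fun _ hu _ hy => le_trans hu hy,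
    fun _ hu _ hv => ⟨x, le_rfl, hu, hv⟩⟩

theorem isFilt_sUnion_of_isChain {c : Set (Set S)} (hc : ∀ F ∈ c, IsFilt F)
    (hchain : IsChain (· ⊆ ·) c) (hne : c.Nonempty) : IsFilt (⋃₀ c) := by
  obtain ⟨F₀, hF₀⟩ := hne
  refine ⟨?_, ?_, ?_, ?_⟩
  · obtain ⟨y, hy⟩ := (hc F₀ hF₀).1
    exact ⟨y, F₀, hF₀, hy⟩
  · rintro ⟨F, hF, h0⟩
    exact (hc F hF).2.1 h0
  · rintro u ⟨F, hF, hu⟩ y hy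
    exact ⟨F, hF, (hc F hF).mem_of_le hu hy⟩
  · rintro u ⟨F, hF, hu⟩ v ⟨G, hG, hv⟩
    obtain ⟨H, hH, hFH, hGH⟩ : ∃ H ∈ c, F ⊆ H ∧ G ⊆ H := by
      rcases hchain.total hF hG with h | h
      · exact ⟨G, hG, h, le_rfl⟩
      · exact ⟨F, hF, le_rfl, h⟩
    exact ⟨u ⊓ v, ⟨H, hH, (hc H hH).inf_mem (hFH hu) (hGH hv)⟩, inf_le_left, inf_le_right⟩

theorem exists_isUltra_mem {x : S} (hx : x ≠ 0) : ∃ F : Set S, IsUltra F ∧ x ∈ F := by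
  obtain ⟨M, hxM, hM⟩ := zorn_subset_nonempty {F : Set S | IsFilt F}
    (fun c hc hchain hne => ⟨⋃₀ c, isFilt_sUnion_of_isChain hc hchain hne,
      fun _ hs => Set.subset_sUnion_of_mem hs⟩) _ (isFilt_Ici hx)
  exact ⟨M, ⟨hM.1, fun G hG hMG => subset_antisymm (hM.2 hG hMG) hMG⟩, hxM le_rfl⟩

theorem IsUltra.mem_of_forall_inf_ne_zero {F : Set S} (hF : IsUltra F) {b : S}
    (hb : ∀ x ∈ F, x ⊓ b ≠ 0) : b ∈ F := by
  obtain ⟨w, hw⟩ := hF.1.1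
  set G : Set S := {y | ∃ x ∈ F, x ⊓ b ≤ y}
  have hG : IsFilt G := by
    refine ⟨⟨b, w, hw, inf_le_right⟩, ?_, ?_, ?_⟩
    · rintro ⟨x, hx, hle⟩
      exact hb x hx (eq_zero_of_le_zero hle)
    · rintro u ⟨x, hx, hle⟩ y hy
      exact ⟨x, hx, le_trans hle hy⟩
    · rintro u ⟨x, hx, hxu⟩ v ⟨y, hy, hyv⟩
      refine ⟨x ⊓ y ⊓ b, ⟨x ⊓ y, hF.1.inf_mem hx hy, le_rfl⟩, ?_, ?_⟩
      · exact le_trans (inf_le_inf_right b inf_le_left) hxu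
      · exact le_trans (inf_le_inf_right b inf_le_right) hyv
  rw [← hF.2 G hG fun x hx => ⟨x, hx, inf_le_left⟩]
  exact ⟨w, hw, inf_le_right⟩

/-- `V_a ⊆ V_b` (every ultrafilter containing `a` contains `b`) iff `a → b`. -/
theorem ultrafilter_subset_iff_lenzArrow (a b : S) :
    (∀ F : Set S, IsUltra F → a ∈ F → b ∈ F) ↔ LenzArrow a b := by
  constructor
  · intro h x hx hxa hxb
    obtain ⟨F, hF, hxF⟩ := exists_isUltra_mem hx
    exact hF.1.inf_ne_zero hxF (h F hF (hF.1.mem_of_le hxF hxa)) hxb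
  · intro harr F hF haF
    refine hF.mem_of_forall_inf_ne_zero fun x hx hxb => ?_
    have hxa : x ⊓ a ≠ 0 := hF.1.inf_ne_zero hx haF
    refine harr (x ⊓ a) hxa inf_le_right (eq_zero_of_le_zero ?_)
    exact hxb ▸ inf_le_inf_right b inf_le_left
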